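/- arXiv:2309.17067 — 3 statements merged into one kernel-verified Lean document; each statement's English description precedes it below -/
import Mathlib

section
/- Let A₁ ⊂ I₁ and A₂ ⊂ I₂ be finite nonempty proper unions of intervals in open intervals I₁, I₂ ⊂ ℝ, and define u(x₁,x₂) := 1_{A₁}(x₁) + 1_{A₂}(x₂) on Ω = I₁ × I₂. Then the mixed distributional derivative ∂₁∂₂u vanishes identically, yet u is not of the form u(x) = f(x₁) for all x nor of the form u(x) = g(x₂) for all x (up to null sets). -/
open MeasureTheory Filter Topology Set

/-- An indicator of a set of measure strictly between `0` and that of `Ioo a b`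
is not a.e. constant on `Ioo a b`. -/
lemma indicator_not_ae_const {a b : ℝ} {A : Set ℝ} (hA : MeasurableSet A)
    (hsub : A ⊆ Ioo a b) (h0 : 0 < volume A) (h1 : volume A < volume (Ioo a b)) (c : ℝ) :
    ¬ (∀ᵐ t ∂(volume.restrict (Ioo a b)), A.indicator (fun _ => (1:ℝ)) t = c) := by
  intro h
  rw [ae_restrict_iff' measurableSet_Ioo, ae_iff] at h
  by_cases hc : c = 1
  · subst hc
    have hss : Ioo a b \ A ⊆ {t | ¬ (t ∈ Ioo a b → A.indicator (fun _ => (1:ℝ)) t = 1)} := by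
      intro t ht
      simp only [Set.mem_setOf_eq, Classical.not_imp]
      exact ⟨ht.1, by simp [Set.indicator_of_notMem ht.2]⟩
    have hnull : volume (Ioo a b \ A) = 0 := measure_mono_null hss h
    have hun : A ∪ (Ioo a b \ A) = Ioo a b := Set.union_diff_cancel hsub
    have : volume (Ioo a b) ≤ volume A + volume (Ioo a b \ A) := by
      nth_rewrite 1 [← hun]; exact measure_union_le (μ := (volume : Measure ℝ)) A (Ioo a b \ A)
    rw [hnull, add_zero] at this
    exact absurd h1 (not_lt.2 this)
  · have hss : A ⊆ {t | ¬ (t ∈ Ioo a b → A.indicator (fun _ => (1:ℝ)) t = c)} := by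
      intro t ht
      simp only [Set.mem_setOf_eq, Classical.not_imp]
      exact ⟨hsub ht, by rw [Set.indicator_of_mem ht]; exact fun h' => hc h'.symm⟩
    have := measure_mono_null hss h
    exact absurd h0 (by simp [this])

/-- mixed second derivative `∂₁∂₂φ` of a test function on `ℝ × ℝ`. -/
noncomputable def d12 (φ : ℝ × ℝ → ℝ) (x : ℝ × ℝ) : ℝ :=
  deriv (fun s => deriv (fun t => φ (s, t)) x.2) x.1

/-- For finite nonempty proper (in the measure-theoretic sense, so that the
indicators are genuinely non-constant up to null sets) unions of intervals `A₁ ⊆ I₁`,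
`A₂ ⊆ I₂` and `u(x) = 1_{A₁}(x₁) + 1_{A₂}(x₂)` on `Ω = I₁ × I₂`, the mixed distributional
derivative `∂₁∂₂u` vanishes, yet `u` is not a.e. a function of `x₁` alone nor of `x₂`
alone. -/
theorem stmt8 (a₁ b₁ a₂ b₂ : ℝ) (h1 : a₁ < b₁) (h2 : a₂ < b₂)
    (A₁ A₂ : Set ℝ)
    (hA₁int : ∃ s : Finset (ℝ × ℝ), A₁ = ⋃ p ∈ s, Ioo p.1 p.2)
    (hA₂int : ∃ s : Finset (ℝ × ℝ), A₂ = ⋃ p ∈ s, Ioo p.1 p.2)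
    (hA₁sub : A₁ ⊆ Ioo a₁ b₁) (hA₂sub : A₂ ⊆ Ioo a₂ b₂)
    (hA₁ne : 0 < volume A₁) (hA₁prop : volume A₁ < volume (Ioo a₁ b₁))
    (hA₂ne : 0 < volume A₂) (hA₂prop : volume A₂ < volume (Ioo a₂ b₂)) :
    (∀ φ : ℝ × ℝ → ℝ, ContDiff ℝ (⊤ : ℕ∞) φ → HasCompactSupport φ →
        tsupport φ ⊆ Ioo a₁ b₁ ×ˢ Ioo a₂ b₂ →
        ∫ x in Ioo a₁ b₁ ×ˢ Ioo a₂ b₂,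
          (A₁.indicator (fun _ => (1:ℝ)) x.1 + A₂.indicator (fun _ => (1:ℝ)) x.2)
            * d12 φ x = 0) ∧
    ¬(∃ f : ℝ → ℝ, ∀ᵐ x ∂(volume.restrict (Ioo a₁ b₁ ×ˢ Ioo a₂ b₂)),
        A₁.indicator (fun _ => (1:ℝ)) x.1 + A₂.indicator (fun _ => (1:ℝ)) x.2 = f x.1) ∧
    ¬(∃ g : ℝ → ℝ, ∀ᵐ x ∂(volume.restrict (Ioo a₁ b₁ ×ˢ Ioo a₂ b₂)),
        A₁.indicator (fun _ => (1:ℝ)) x.1 + A₂.indicator (fun _ => (1:ℝ)) x.2 = g x.2) := by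
  -- measurability of A₁, A₂
  obtain ⟨s₁, hs₁⟩ := hA₁int
  obtain ⟨s₂, hs₂⟩ := hA₂int
  have hA₁m : MeasurableSet A₁ := by
    rw [hs₁]; exact MeasurableSet.biUnion s₁.countable_toSet fun p _ => measurableSet_Ioo
  have hA₂m : MeasurableSet A₂ := by
    rw [hs₂]; exact MeasurableSet.biUnion s₂.countable_toSet fun p _ => measurableSet_Ioo
  clear hs₁ hs₂
  -- the restricted measures are nontrivial
  have hne₁ : volume.restrict (Ioo a₁ b₁) ≠ 0 := by
    intro h
    have h0 : volume.restrict (Ioo a₁ b₁) (Ioo a₁ b₁) = 0 := by rw [h]; rfl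
    rw [Measure.restrict_apply_self, Real.volume_Ioo] at h0
    exact absurd h0 (ne_of_gt (ENNReal.ofReal_pos.2 (by linarith)))
  have hne₂ : volume.restrict (Ioo a₂ b₂) ≠ 0 := by
    intro h
    have h0 : volume.restrict (Ioo a₂ b₂) (Ioo a₂ b₂) = 0 := by rw [h]; rfl
    rw [Measure.restrict_apply_self, Real.volume_Ioo] at h0
    exact absurd h0 (ne_of_gt (ENNReal.ofReal_pos.2 (by linarith)))
  haveI hb₁ : (ae (volume.restrict (Ioo a₁ b₁))).NeBot := ae_neBot.2 hne₁
  haveI hb₂ : (ae (volume.restrict (Ioo a₂ b₂))).NeBot := ae_neBot.2 hne₂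
  refine ⟨?_, ?_, ?_⟩
  · -- the distributional mixed derivative vanishes
    intro φ hφ hcs hsupp
    have hφd : Differentiable ℝ φ := hφ.differentiable (by simp)
    have hfd : ContDiff ℝ (⊤ : ℕ∞) (fderiv ℝ φ) := hφ.fderiv_right (by simp)
    have hf' : ∀ p : ℝ × ℝ, HasFDerivAt (fderiv ℝ φ) (fderiv ℝ (fderiv ℝ φ) p) p :=
      fun p => ((hfd.differentiable (by simp)) p).hasFDerivAt
    have hzero : ∀ s t : ℝ, s ∉ Ioo a₁ b₁ ∨ t ∉ Ioo a₂ b₂ → φ (s, t) = 0 := by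
      intro s t h
      apply image_eq_zero_of_notMem_tsupport
      intro hmem
      have := hsupp hmem
      exact h.elim (fun hs => hs this.1) (fun ht => ht this.2)
    -- first partials
    have hd1 : ∀ s t : ℝ, HasDerivAt (fun t' => φ (s, t')) (fderiv ℝ φ (s, t) (0, 1)) t := by
      intro s t
      exact ((hφd (s, t)).hasFDerivAt).comp_hasDerivAt t
        ((hasDerivAt_const t s).prodMk (hasDerivAt_id t))
    have hd2 : ∀ s t : ℝ, HasDerivAt (fun s' => φ (s', t)) (fderiv ℝ φ (s, t) (1, 0)) s := by
      intro s t
      exact ((hφd (s, t)).hasFDerivAt).comp_hasDerivAt s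
        ((hasDerivAt_id s).prodMk (hasDerivAt_const s t))
    -- second partials
    have hd3 : ∀ s t : ℝ, HasDerivAt (fun s' => fderiv ℝ φ (s', t) (0, 1))
        (fderiv ℝ (fderiv ℝ φ) (s, t) (1, 0) (0, 1)) s := by
      intro s t
      have hc : HasDerivAt (fun s' => fderiv ℝ φ (s', t))
          (fderiv ℝ (fderiv ℝ φ) (s, t) (1, 0)) s :=
        (hf' (s, t)).comp_hasDerivAt s ((hasDerivAt_id s).prodMk (hasDerivAt_const s t))
      simpa using hc.clm_apply (hasDerivAt_const s ((0:ℝ), (1:ℝ)))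
    have hd4 : ∀ s t : ℝ, HasDerivAt (fun t' => fderiv ℝ φ (s, t') (1, 0))
        (fderiv ℝ (fderiv ℝ φ) (s, t) (0, 1) (1, 0)) t := by
      intro s t
      have hc : HasDerivAt (fun t' => fderiv ℝ φ (s, t'))
          (fderiv ℝ (fderiv ℝ φ) (s, t) (0, 1)) t :=
        (hf' (s, t)).comp_hasDerivAt t ((hasDerivAt_const t s).prodMk (hasDerivAt_id t))
      simpa using hc.clm_apply (hasDerivAt_const t ((1:ℝ), (0:ℝ)))
    -- identification of d12
    have hd12 : ∀ p : ℝ × ℝ, d12 φ p = fderiv ℝ (fderiv ℝ φ) p (1, 0) (0, 1) := by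
      intro p
      have he : (fun s => deriv (fun t => φ (s, t)) p.2)
          = fun s => fderiv ℝ φ (s, p.2) (0, 1) := funext fun s => (hd1 s p.2).deriv
      rw [d12, he, (hd3 p.1 p.2).deriv]
    have hsymm : ∀ p : ℝ × ℝ, fderiv ℝ (fderiv ℝ φ) p (1, 0) (0, 1)
        = fderiv ℝ (fderiv ℝ φ) p (0, 1) (1, 0) := fun p =>
      (hφ.contDiffAt.isSymmSndFDerivAt (by rw [minSmoothness_of_isRCLikeNormedField]; show ((2:ℕ∞) : WithTop ℕ∞) ≤ ((⊤:ℕ∞) : WithTop ℕ∞); exact WithTop.coe_le_coe.2 le_top)).eq _ _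
    -- continuity of d12 φ
    have hcont : Continuous (d12 φ) := by
      have : Continuous (fun p : ℝ × ℝ => fderiv ℝ (fderiv ℝ φ) p (1, 0) (0, 1)) := by
        have h1c : Continuous (fderiv ℝ (fderiv ℝ φ)) := hfd.continuous_fderiv (by simp)
        exact (h1c.clm_apply continuous_const).clm_apply continuous_const
      exact (funext hd12 : d12 φ = _) ▸ this
    -- boundary vanishing of partials
    have e1 : ∀ t, fderiv ℝ φ (a₁, t) ((0:ℝ), (1:ℝ)) = 0 := by
      intro t
      have h := (hd1 a₁ t).deriv
      rw [show (fun t' => φ (a₁, t')) = (fun _ => (0:ℝ)) from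
        funext fun t' => hzero a₁ t' (Or.inl (by simp))] at h
      simpa using h.symm
    have e2 : ∀ t, fderiv ℝ φ (b₁, t) ((0:ℝ), (1:ℝ)) = 0 := by
      intro t
      have h := (hd1 b₁ t).deriv
      rw [show (fun t' => φ (b₁, t')) = (fun _ => (0:ℝ)) from
        funext fun t' => hzero b₁ t' (Or.inl (by simp))] at h
      simpa using h.symm
    have e3 : ∀ s, fderiv ℝ φ (s, a₂) ((1:ℝ), (0:ℝ)) = 0 := by
      intro s
      have h := (hd2 s a₂).deriv
      rw [show (fun s' => φ (s', a₂)) = (fun _ => (0:ℝ)) from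
        funext fun s' => hzero s' a₂ (Or.inr (by simp))] at h
      simpa using h.symm
    have e4 : ∀ s, fderiv ℝ φ (s, b₂) ((1:ℝ), (0:ℝ)) = 0 := by
      intro s
      have h := (hd2 s b₂).deriv
      rw [show (fun s' => φ (s', b₂)) = (fun _ => (0:ℝ)) from
        funext fun s' => hzero s' b₂ (Or.inr (by simp))] at h
      simpa using h.symm
    -- the inner integrals vanish
    have hC : ∀ t : ℝ, (∫ s in Ioo a₁ b₁, d12 φ (s, t)) = 0 := by
      intro t
      have hψ : ∀ s, HasDerivAt (fun s' => fderiv ℝ φ (s', t) (0, 1)) (d12 φ (s, t)) s := by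
        intro s; rw [hd12 (s, t)]; exact hd3 s t
      have hintg : IntervalIntegrable (fun s => d12 φ (s, t)) volume a₁ b₁ :=
        (hcont.comp (continuous_id.prodMk continuous_const)).intervalIntegrable _ _
      rw [← integral_Ioc_eq_integral_Ioo, ← intervalIntegral.integral_of_le h1.le,
        intervalIntegral.integral_eq_sub_of_hasDerivAt (fun s _ => hψ s) hintg,
        e1 t, e2 t, sub_zero]
    have hD : ∀ s : ℝ, (∫ t in Ioo a₂ b₂, d12 φ (s, t)) = 0 := by
      intro s
      have hχ : ∀ t, HasDerivAt (fun t' => fderiv ℝ φ (s, t') (1, 0)) (d12 φ (s, t)) t := by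
        intro t; rw [hd12 (s, t), hsymm (s, t)]; exact hd4 s t
      have hintg : IntervalIntegrable (fun t => d12 φ (s, t)) volume a₂ b₂ :=
        (hcont.comp (continuous_const.prodMk continuous_id)).intervalIntegrable _ _
      rw [← integral_Ioc_eq_integral_Ioo, ← intervalIntegral.integral_of_le h2.le,
        intervalIntegral.integral_eq_sub_of_hasDerivAt (fun t _ => hχ t) hintg,
        e3 s, e4 s, sub_zero]
    -- integrability
    have hd12int : IntegrableOn (d12 φ) (Ioo a₁ b₁ ×ˢ Ioo a₂ b₂) volume := by
      refine IntegrableOn.mono_set ?_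
        (Set.prod_mono Ioo_subset_Icc_self Ioo_subset_Icc_self)
      exact (hcont.continuousOn).integrableOn_compact (isCompact_Icc.prod isCompact_Icc)
    have hint1 : IntegrableOn (fun x : ℝ × ℝ => A₁.indicator (fun _ => (1:ℝ)) x.1 * d12 φ x)
        (Ioo a₁ b₁ ×ˢ Ioo a₂ b₂) volume := by
      refine hd12int.bdd_mul ?_ (c := 1) (Eventually.of_forall fun x => ?_)
      · exact ((measurable_const.indicator hA₁m).comp measurable_fst).aestronglyMeasurable
      · by_cases h : x.1 ∈ A₁ <;> simp [Set.indicator_of_mem, Set.indicator_of_notMem, h]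
    have hint2 : IntegrableOn (fun x : ℝ × ℝ => A₂.indicator (fun _ => (1:ℝ)) x.2 * d12 φ x)
        (Ioo a₁ b₁ ×ˢ Ioo a₂ b₂) volume := by
      refine hd12int.bdd_mul ?_ (c := 1) (Eventually.of_forall fun x => ?_)
      · exact ((measurable_const.indicator hA₂m).comp measurable_snd).aestronglyMeasurable
      · by_cases h : x.2 ∈ A₂ <;> simp [Set.indicator_of_mem, Set.indicator_of_notMem, h]
    rw [show (fun x : ℝ × ℝ => (A₁.indicator (fun _ => (1:ℝ)) x.1 + A₂.indicator (fun _ => (1:ℝ)) x.2) * d12 φ x) = fun x => A₁.indicator (fun _ => (1:ℝ)) x.1 * d12 φ x + A₂.indicator (fun _ => (1:ℝ)) x.2 * d12 φ x from funext fun x => add_mul _ _ _]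
    rw [integral_add hint1 hint2]
    have hrw : (volume : Measure (ℝ × ℝ)).restrict (Ioo a₁ b₁ ×ˢ Ioo a₂ b₂)
        = (volume.restrict (Ioo a₁ b₁)).prod (volume.restrict (Ioo a₂ b₂)) := by
      rw [Measure.prod_restrict, ← Measure.volume_eq_prod ℝ ℝ]
    have hint1' : Integrable (fun x : ℝ × ℝ => A₁.indicator (fun _ => (1:ℝ)) x.1 * d12 φ x)
        ((volume.restrict (Ioo a₁ b₁)).prod (volume.restrict (Ioo a₂ b₂))) := by
      rwa [IntegrableOn, hrw] at hint1
    have hint2' : Integrable (fun x : ℝ × ℝ => A₂.indicator (fun _ => (1:ℝ)) x.2 * d12 φ x)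
        ((volume.restrict (Ioo a₁ b₁)).prod (volume.restrict (Ioo a₂ b₂))) := by
      rwa [IntegrableOn, hrw] at hint2
    rw [hrw]
    rw [integral_prod _ hint1', integral_prod_symm _ hint2']
    have hz1 : ∀ x₁ : ℝ, (∫ x₂ in Ioo a₂ b₂,
        A₁.indicator (fun _ => (1:ℝ)) x₁ * d12 φ (x₁, x₂)) = 0 := by
      intro x₁; rw [integral_const_mul, hD x₁, mul_zero]
    have hz2 : ∀ x₂ : ℝ, (∫ x₁ in Ioo a₁ b₁,
        A₂.indicator (fun _ => (1:ℝ)) x₂ * d12 φ (x₁, x₂)) = 0 := by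
      intro x₂; rw [integral_const_mul, hC x₂, mul_zero]
    simp only [hz1, hz2, integral_zero, add_zero]
  · -- not a function of x₁ alone
    rintro ⟨f, hf⟩
    rw [show (volume : Measure (ℝ × ℝ)).restrict (Ioo a₁ b₁ ×ˢ Ioo a₂ b₂)
        = (volume.restrict (Ioo a₁ b₁)).prod (volume.restrict (Ioo a₂ b₂)) by
      rw [Measure.prod_restrict, ← Measure.volume_eq_prod ℝ ℝ]] at hf
    have h2 := Measure.ae_ae_of_ae_prod hf
    obtain ⟨x₁, hx₁⟩ := h2.exists
    refine indicator_not_ae_const hA₂m hA₂sub hA₂ne hA₂prop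
      (f x₁ - A₁.indicator (fun _ => (1:ℝ)) x₁) ?_
    filter_upwards [hx₁] with t ht
    linarith
  · -- not a function of x₂ alone
    rintro ⟨g, hg⟩
    rw [show (volume : Measure (ℝ × ℝ)).restrict (Ioo a₁ b₁ ×ˢ Ioo a₂ b₂)
        = (volume.restrict (Ioo a₁ b₁)).prod (volume.restrict (Ioo a₂ b₂)) by
      rw [Measure.prod_restrict, ← Measure.volume_eq_prod ℝ ℝ]] at hg
    have h2 := Measure.ae_ae_of_ae_prod hg
    obtain ⟨y, hy⟩ := h2.exists
    refine indicator_not_ae_const hA₁m hA₁sub hA₁ne hA₁prop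
      (A₁.indicator (fun _ => (1:ℝ)) y) ?_
    filter_upwards [h2] with x₁ hx₁
    obtain ⟨t, ht1, ht2⟩ := (hx₁.and hy).exists
    linarith
end

section
/- Let ν be a finite positive measure on (−1,1), and for l = 1,2 let y_l : (−1,1) → (−1,1) be smooth increasing functions. Define u on (−1,1)² by u(x) := ∫_{−1}^{1} 1_{(y₁(t),1)}(x₁) · 1_{(−1,y₂(t))}(x₂) dν(t). Then the mixed distributional derivative ∂₁∂₂u equals the pushforward measure (y₁, y₂)_# ν (up to sign), i.e., |∂₁∂₂u| = (t ↦ (y₁(t), y₂(t)))_# ν as measures on (−1,1)². -/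
open MeasureTheory Filter Topology Set

lemma hasDerivAt_snd (φ : ℝ × ℝ → ℝ) (hφ : ContDiff ℝ (⊤ : ℕ∞) φ) (s t : ℝ) :
    HasDerivAt (fun t' => φ (s, t')) (fderiv ℝ φ (s, t) (0, 1)) t := by
  have h1 : HasFDerivAt φ (fderiv ℝ φ (s, t)) (s, t) :=
    (hφ.differentiable (by simp) (s, t)).hasFDerivAt
  have h2 : HasDerivAt (fun t' : ℝ => ((s, t') : ℝ × ℝ)) (0, 1) t :=
    HasDerivAt.prodMk (hasDerivAt_const t s) (hasDerivAt_id t)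
  exact h1.comp_hasDerivAt t h2

lemma hasDerivAt_fst (φ : ℝ × ℝ → ℝ) (hφ : ContDiff ℝ (⊤ : ℕ∞) φ) (s t : ℝ) :
    HasDerivAt (fun s' => φ (s', t)) (fderiv ℝ φ (s, t) (1, 0)) s := by
  have h1 : HasFDerivAt φ (fderiv ℝ φ (s, t)) (s, t) :=
    (hφ.differentiable (by simp) (s, t)).hasFDerivAt
  have h2 : HasDerivAt (fun s' : ℝ => ((s', t) : ℝ × ℝ)) (1, 0) s :=
    HasDerivAt.prodMk (hasDerivAt_id s) (hasDerivAt_const s t)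
  exact h1.comp_hasDerivAt s h2

noncomputable def Gd (φ : ℝ × ℝ → ℝ) : ℝ × ℝ → ℝ := fun x => fderiv ℝ φ x (0, 1)

lemma Gd_contDiff (φ : ℝ × ℝ → ℝ) (hφ : ContDiff ℝ (⊤ : ℕ∞) φ) : ContDiff ℝ (⊤ : ℕ∞) (Gd φ) := by
  have h1 : ContDiff ℝ (⊤ : ℕ∞) (fderiv ℝ φ) := hφ.fderiv_right (by simp)
  exact (ContinuousLinearMap.apply ℝ ℝ ((0:ℝ), (1:ℝ))).contDiff.comp h1

lemma d12_eq (φ : ℝ × ℝ → ℝ) (hφ : ContDiff ℝ (⊤ : ℕ∞) φ) (x : ℝ × ℝ) :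
    d12 φ x = fderiv ℝ (Gd φ) x (1, 0) := by
  have h1 : (fun s => deriv (fun t => φ (s, t)) x.2) = fun s => Gd φ (s, x.2) := by
    funext s
    exact (hasDerivAt_snd φ hφ s x.2).deriv
  rw [d12, h1]
  have := (hasDerivAt_fst (Gd φ) (Gd_contDiff φ hφ) x.1 x.2).deriv
  simpa using this

lemma d12_cont (φ : ℝ × ℝ → ℝ) (hφ : ContDiff ℝ (⊤ : ℕ∞) φ) : Continuous (d12 φ) := by
  have : Continuous (fun x => fderiv ℝ (Gd φ) x (1, 0)) := by
    have h1 : ContDiff ℝ (⊤ : ℕ∞) (fderiv ℝ (Gd φ)) := (Gd_contDiff φ hφ).fderiv_right (by simp)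
    exact (ContinuousLinearMap.apply ℝ ℝ ((1:ℝ), (0:ℝ))).continuous.comp h1.continuous
  exact this.congr fun x => (d12_eq φ hφ x).symm

lemma Gd_supp (φ : ℝ × ℝ → ℝ) : Function.support (Gd φ) ⊆ tsupport φ := by
  intro x hx
  have : fderiv ℝ φ x ≠ 0 := by
    intro h; apply hx; simp [Gd, h]
  exact support_fderiv_subset ℝ this

lemma d12_supp (φ : ℝ × ℝ → ℝ) (hφ : ContDiff ℝ (⊤ : ℕ∞) φ) :
    Function.support (d12 φ) ⊆ tsupport φ := by
  intro x hx
  by_contra hxn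
  apply hx
  rw [d12_eq φ hφ x]
  have hGd : x ∉ tsupport (Gd φ) :=
    fun h => hxn (closure_minimal (Gd_supp φ) (isClosed_tsupport φ) h)
  rw [fderiv_of_notMem_tsupport (𝕜 := ℝ) hGd]
  simp

lemma d12_compactSupport (φ : ℝ × ℝ → ℝ) (hφ : ContDiff ℝ (⊤ : ℕ∞) φ)
    (hφs : HasCompactSupport φ) : HasCompactSupport (d12 φ) :=
  hφs.mono' (d12_supp φ hφ)

lemma Gd_zero_right (φ : ℝ × ℝ → ℝ) (hsub : tsupport φ ⊆ Ioo (-1:ℝ) 1 ×ˢ Ioo (-1:ℝ) 1)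
    (y : ℝ) : Gd φ (1, y) = 0 := by
  have h : ((1:ℝ), y) ∉ tsupport φ := by
    intro h
    have := (hsub h).1
    simp at this
  simp [Gd, fderiv_of_notMem_tsupport (𝕜 := ℝ) h]

lemma key_rect (φ : ℝ × ℝ → ℝ) (hφ : ContDiff ℝ (⊤ : ℕ∞) φ) (hφs : HasCompactSupport φ)
    (hsub : tsupport φ ⊆ Ioo (-1:ℝ) 1 ×ˢ Ioo (-1:ℝ) 1)
    (a b : ℝ) (ha : a ∈ Ioo (-1:ℝ) 1) (hb : b ∈ Ioo (-1:ℝ) 1) :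
    ∫ x in Ioo a 1 ×ˢ Ioo (-1:ℝ) b, d12 φ x = - φ (a, b) := by
  have hcont := d12_cont φ hφ
  have hI : Integrable (d12 φ) (volume : Measure (ℝ × ℝ)) :=
    hcont.integrable_of_hasCompactSupport (d12_compactSupport φ hφ hφs)
  have hmeas : (volume : Measure (ℝ × ℝ)).restrict (Ioo a 1 ×ˢ Ioo (-1:ℝ) b)
      = (volume.restrict (Ioo a 1)).prod (volume.restrict (Ioo (-1:ℝ) b)) := by
    rw [Measure.prod_restrict, ← Measure.volume_eq_prod ℝ ℝ]
  rw [hmeas, integral_prod_symm _ (hmeas ▸ hI.restrict)]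
  have hinner : ∀ y : ℝ, (∫ s in Ioo a 1, d12 φ (s, y)) = - Gd φ (a, y) := by
    intro y
    rw [← integral_Ioc_eq_integral_Ioo, ← intervalIntegral.integral_of_le ha.2.le]
    have hftc := intervalIntegral.integral_eq_sub_of_hasDerivAt
      (f := fun s => Gd φ (s, y)) (f' := fun s => d12 φ (s, y))
      (a := a) (b := 1)
      (fun s _ => by
        show HasDerivAt _ (d12 φ (s, y)) s
        rw [d12_eq φ hφ (s, y)]
        exact hasDerivAt_fst (Gd φ) (Gd_contDiff φ hφ) s y)
      ((hcont.comp (continuous_id.prodMk continuous_const)).intervalIntegrable a 1)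
    rw [hftc, Gd_zero_right φ hsub y]
    ring
  simp_rw [hinner]
  rw [integral_neg]
  have hftc2 := intervalIntegral.integral_eq_sub_of_hasDerivAt
    (f := fun y => φ (a, y)) (f' := fun y => Gd φ (a, y))
    (a := (-1:ℝ)) (b := b)
    (fun y _ => hasDerivAt_snd φ hφ a y)
    (((Gd_contDiff φ hφ).continuous.comp (continuous_const.prodMk continuous_id)).intervalIntegrable (-1) b)
  have hb1 : φ (a, -1) = 0 := by
    have h : ((a:ℝ), (-1:ℝ)) ∉ tsupport φ := by
      intro h
      have := (hsub h).2
      simp at this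
    exact image_eq_zero_of_notMem_tsupport h
  rw [← integral_Ioc_eq_integral_Ioo, ← intervalIntegral.integral_of_le hb.1.le, hftc2, hb1]
  ring

/-- Let `ν` be a finite positive measure on `(−1,1)` and `y₁, y₂` smooth
increasing maps of `(−1,1)` into itself. For
`u(x) = ∫ 1_{(y₁(t),1)}(x₁) 1_{(−1,y₂(t))}(x₂) dν(t)`, the mixed distributional derivative
`∂₁∂₂u` coincides, up to sign, with the pushforward of `ν` by `t ↦ (y₁(t), y₂(t))`:
tested against any `φ ∈ C_c^∞((−1,1)²)`,
`∫ u ∂₁∂₂φ = ε ∫ φ(y₁(t), y₂(t)) dν(t)` with `ε ∈ {1,−1}`. -/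
theorem stmt10 (ν : Measure ℝ) [IsFiniteMeasure ν]
    (y₁ y₂ : ℝ → ℝ)
    (hy₁smooth : ContDiffOn ℝ (⊤ : ℕ∞) y₁ (Ioo (-1:ℝ) 1))
    (hy₂smooth : ContDiffOn ℝ (⊤ : ℕ∞) y₂ (Ioo (-1:ℝ) 1))
    (hy₁mono : StrictMonoOn y₁ (Ioo (-1:ℝ) 1))
    (hy₂mono : StrictMonoOn y₂ (Ioo (-1:ℝ) 1))
    (hy₁map : MapsTo y₁ (Ioo (-1:ℝ) 1) (Ioo (-1:ℝ) 1))
    (hy₂map : MapsTo y₂ (Ioo (-1:ℝ) 1) (Ioo (-1:ℝ) 1)) :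
    ∃ ε : ℝ, (ε = 1 ∨ ε = -1) ∧
      ∀ φ : ℝ × ℝ → ℝ, ContDiff ℝ (⊤ : ℕ∞) φ → HasCompactSupport φ →
        tsupport φ ⊆ Ioo (-1:ℝ) 1 ×ˢ Ioo (-1:ℝ) 1 →
        ∫ x in Ioo (-1:ℝ) 1 ×ˢ Ioo (-1:ℝ) 1,
          (∫ t in Ioo (-1:ℝ) 1,
              (Ioo (y₁ t) 1).indicator (fun _ => (1:ℝ)) x.1 *
              (Ioo (-1:ℝ) (y₂ t)).indicator (fun _ => (1:ℝ)) x.2 ∂ν)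
            * d12 φ x
          = ε * ∫ t in Ioo (-1:ℝ) 1, φ (y₁ t, y₂ t) ∂ν := by
  refine ⟨-1, Or.inr rfl, ?_⟩
  intro φ hφ hφs hsub
  set S : Set (ℝ × ℝ) := Ioo (-1:ℝ) 1 ×ˢ Ioo (-1:ℝ) 1 with hS
  have h₁ae : AEMeasurable y₁ (ν.restrict (Ioo (-1:ℝ) 1)) :=
    hy₁smooth.continuousOn.aemeasurable measurableSet_Ioo
  have h₂ae : AEMeasurable y₂ (ν.restrict (Ioo (-1:ℝ) 1)) :=
    hy₂smooth.continuousOn.aemeasurable measurableSet_Ioo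
  obtain ⟨Y₁, hY₁, hyeq₁⟩ : ∃ g : ℝ → ℝ, Measurable g ∧ y₁ =ᵐ[ν.restrict (Ioo (-1:ℝ) 1)] g :=
    ⟨h₁ae.mk y₁, h₁ae.measurable_mk, h₁ae.ae_eq_mk⟩
  obtain ⟨Y₂, hY₂, hyeq₂⟩ : ∃ g : ℝ → ℝ, Measurable g ∧ y₂ =ᵐ[ν.restrict (Ioo (-1:ℝ) 1)] g :=
    ⟨h₂ae.mk y₂, h₂ae.measurable_mk, h₂ae.ae_eq_mk⟩
  have hcont := d12_cont φ hφ
  obtain ⟨C, hC⟩ := (d12_compactSupport φ hφ hφs).exists_bound_of_continuous hcont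
  have hC0 : (0:ℝ) ≤ C := le_trans (norm_nonneg _) (hC 0)
  set F : (ℝ × ℝ) → ℝ → ℝ := fun x t =>
    (Ioo (Y₁ t) 1).indicator (fun _ => (1:ℝ)) x.1 *
      (Ioo (-1:ℝ) (Y₂ t)).indicator (fun _ => (1:ℝ)) x.2 * d12 φ x with hF
  -- Step A: rewrite LHS with measurable representatives and push `d12 φ x` inside
  have hLHS : (∫ x in S,
        (∫ t in Ioo (-1:ℝ) 1,
            (Ioo (y₁ t) 1).indicator (fun _ => (1:ℝ)) x.1 *
            (Ioo (-1:ℝ) (y₂ t)).indicator (fun _ => (1:ℝ)) x.2 ∂ν) * d12 φ x)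
      = ∫ x in S, ∫ t in Ioo (-1:ℝ) 1, F x t ∂ν := by
    refine integral_congr_ae (Filter.Eventually.of_forall fun x => ?_)
    show (∫ t in Ioo (-1:ℝ) 1,
        (Ioo (y₁ t) 1).indicator (fun _ => (1:ℝ)) x.1 *
        (Ioo (-1:ℝ) (y₂ t)).indicator (fun _ => (1:ℝ)) x.2 ∂ν) * d12 φ x
      = ∫ t in Ioo (-1:ℝ) 1, F x t ∂ν
    rw [← integral_mul_const]
    refine integral_congr_ae ?_
    filter_upwards [hyeq₁, hyeq₂] with t e1 e2
    rw [hF]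
    simp only [← e1, ← e2]
  -- finiteness of the restricted measures
  haveI : IsFiniteMeasure ((volume : Measure (ℝ × ℝ)).restrict S) := by
    constructor
    rw [Measure.restrict_apply_univ, hS, Measure.volume_eq_prod ℝ ℝ, Measure.prod_prod]
    exact ENNReal.mul_lt_top measure_Ioo_lt_top measure_Ioo_lt_top
  -- integrability on the product
  have hmeasF : Measurable (Function.uncurry F) := by
    have h1 : Measurable (fun p : (ℝ × ℝ) × ℝ =>
        (Ioo (Y₁ p.2) 1).indicator (fun _ => (1:ℝ)) p.1.1) := by
      have : (fun p : (ℝ × ℝ) × ℝ => (Ioo (Y₁ p.2) 1).indicator (fun _ => (1:ℝ)) p.1.1)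
          = fun p => if Y₁ p.2 < p.1.1 ∧ p.1.1 < 1 then (1:ℝ) else 0 := by
        funext p; simp [Set.indicator_apply, Set.mem_Ioo]
      rw [this]
      refine Measurable.ite ?_ measurable_const measurable_const
      rw [show {p : (ℝ × ℝ) × ℝ | Y₁ p.2 < p.1.1 ∧ p.1.1 < 1}
          = {p : (ℝ × ℝ) × ℝ | Y₁ p.2 < p.1.1} ∩ {p : (ℝ × ℝ) × ℝ | p.1.1 < 1} from rfl]
      exact (measurableSet_lt (hY₁.comp measurable_snd)
        (measurable_fst.fst)).inter
        (measurableSet_lt measurable_fst.fst measurable_const)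
    have h2 : Measurable (fun p : (ℝ × ℝ) × ℝ =>
        (Ioo (-1:ℝ) (Y₂ p.2)).indicator (fun _ => (1:ℝ)) p.1.2) := by
      have : (fun p : (ℝ × ℝ) × ℝ => (Ioo (-1:ℝ) (Y₂ p.2)).indicator (fun _ => (1:ℝ)) p.1.2)
          = fun p => if (-1:ℝ) < p.1.2 ∧ p.1.2 < Y₂ p.2 then (1:ℝ) else 0 := by
        funext p; simp [Set.indicator_apply, Set.mem_Ioo]
      rw [this]
      refine Measurable.ite ?_ measurable_const measurable_const
      rw [show {p : (ℝ × ℝ) × ℝ | (-1:ℝ) < p.1.2 ∧ p.1.2 < Y₂ p.2}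
          = {p : (ℝ × ℝ) × ℝ | (-1:ℝ) < p.1.2} ∩ {p : (ℝ × ℝ) × ℝ | p.1.2 < Y₂ p.2} from rfl]
      exact (measurableSet_lt measurable_const measurable_fst.snd).inter
        (measurableSet_lt measurable_fst.snd (hY₂.comp measurable_snd))
    exact (h1.mul h2).mul (hcont.measurable.comp measurable_fst)
  have hbound : ∀ p : (ℝ × ℝ) × ℝ, ‖Function.uncurry F p‖ ≤ C := by
    intro p
    have hd := hC p.1
    rw [Real.norm_eq_abs] at hd ⊢
    show |(Ioo (Y₁ p.2) 1).indicator (fun _ => (1:ℝ)) p.1.1 *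
      (Ioo (-1:ℝ) (Y₂ p.2)).indicator (fun _ => (1:ℝ)) p.1.2 * d12 φ p.1| ≤ C
    by_cases h1 : p.1.1 ∈ Ioo (Y₁ p.2) 1 <;> by_cases h2 : p.1.2 ∈ Ioo (-1:ℝ) (Y₂ p.2) <;>
      simp [Set.indicator_of_mem, Set.indicator_of_notMem, h1, h2, hC0, hd]
  have hFint : Integrable (Function.uncurry F)
      (((volume : Measure (ℝ × ℝ)).restrict S).prod (ν.restrict (Ioo (-1:ℝ) 1))) :=
    Integrable.mono' (integrable_const C) hmeasF.aestronglyMeasurable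
      (Filter.Eventually.of_forall hbound)
  rw [hLHS, integral_integral_swap hFint]
  -- pointwise identification of the inner integral
  have hpt : ∀ᵐ t ∂(ν.restrict (Ioo (-1:ℝ) 1)),
      (∫ x in S, F x t) = - φ (y₁ t, y₂ t) := by
    filter_upwards [hyeq₁, hyeq₂, ae_restrict_mem measurableSet_Ioo] with t e1 e2 ht
    have ha := hy₁map ht
    have hb := hy₂map ht
    have hind : ∀ x : ℝ × ℝ, F x t
        = (Ioo (Y₁ t) 1 ×ˢ Ioo (-1:ℝ) (Y₂ t)).indicator (d12 φ) x := by
      intro x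
      rw [hF]
      by_cases h1 : x.1 ∈ Ioo (Y₁ t) 1 <;> by_cases h2 : x.2 ∈ Ioo (-1:ℝ) (Y₂ t) <;>
        simp [Set.indicator_apply, h1, h2, Set.mem_prod]
    simp_rw [hind]
    rw [setIntegral_indicator (measurableSet_Ioo.prod measurableSet_Ioo)]
    rw [← e1, ← e2]
    have hsubset : Ioo (y₁ t) 1 ×ˢ Ioo (-1:ℝ) (y₂ t) ⊆ Ioo (-1:ℝ) 1 ×ˢ Ioo (-1:ℝ) 1 :=
      Set.prod_mono (Ioo_subset_Ioo ha.1.le le_rfl) (Ioo_subset_Ioo le_rfl hb.2.le)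
    rw [show S ∩ Ioo (y₁ t) 1 ×ˢ Ioo (-1:ℝ) (y₂ t) = Ioo (y₁ t) 1 ×ˢ Ioo (-1:ℝ) (y₂ t) from
      Set.inter_eq_self_of_subset_right hsubset]
    exact key_rect φ hφ hφs hsub _ _ ha hb
  rw [integral_congr_ae hpt, integral_neg]
  ring
end

section
/- Let h : ℝ → ℝ be a nondecreasing BV function with distributional derivative Dh = h'·dt + D^s h (Lebesgue decomposition). Then for every Lebesgue-measurable set I ⊂ ℝ, the image h(I) is measurable and H¹(h(I)) ≤ ν(I) + ∫_I h'(s) ds, where ν(I) := inf{D^s h(J) : J open, I ⊂ J}. -/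
open MeasureTheory Set

/-!
The Stieltjes measure of `h` is the outer measure generated by the lengths `h b - h a` of
half-open intervals `(a, b]`, and `h` maps `(a, b]` into `[h a, h b]`, an interval of exactly
that length. Hence `volume (h '' s) ≤ Dh s` for every set `s`. Splitting `Dh s` according to
the Lebesgue decomposition, the singular part is at most `σ J` for every `J ⊇ s`.
-/

namespace StieltjesFunction

lemma volume_image_le_length (h : StieltjesFunction ℝ) (s : Set ℝ) :
    volume ((h : ℝ → ℝ) '' s) ≤ h.length s := by
  rw [length_eq]
  refine le_iInf₂ fun a b => le_iInf fun hs => ?_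
  have himage : (h : ℝ → ℝ) '' s ⊆ Icc (h a) (h b) := by
    rintro _ ⟨x, hx, rfl⟩
    obtain ⟨hax, hxb⟩ := hs ⟨hx, not_isBot x⟩
    exact ⟨h.mono hax.le, h.mono hxb⟩
  calc volume ((h : ℝ → ℝ) '' s) ≤ volume (Icc (h a) (h b)) := measure_mono himage
    _ = ENNReal.ofReal (h b - h a) := Real.volume_Icc

lemma volume_image_le_measure (h : StieltjesFunction ℝ) (s : Set ℝ) :
    volume ((h : ℝ → ℝ) '' s) ≤ h.measure s := by
  have hle : OuterMeasure.comap (h : ℝ → ℝ) volume.toOuterMeasure ≤ h.outer :=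
    OuterMeasure.le_ofFunction.2 h.volume_image_le_length
  rw [measure_def]
  exact hle s

end StieltjesFunction

theorem stmt13_general (h : StieltjesFunction ℝ) (σ : Measure ℝ) (g : ℝ → ENNReal)
    (hdecomp : h.measure = σ + volume.withDensity g) :
    ∀ I : Set ℝ, MeasurableSet I →
      volume ((h : ℝ → ℝ) '' I) ≤
        (⨅ (J : Set ℝ) (_ : IsOpen J) (_ : I ⊆ J), σ J) + ∫⁻ x in I, g x := by
  intro I _
  have hσ : σ I ≤ ⨅ (J : Set ℝ) (_ : IsOpen J) (_ : I ⊆ J), σ J :=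
    le_iInf₂ fun _ _ => le_iInf fun hIJ => measure_mono hIJ
  calc volume ((h : ℝ → ℝ) '' I) ≤ h.measure I := h.volume_image_le_measure I
    _ = σ I + ∫⁻ x in I, g x := by rw [hdecomp, Measure.add_apply, withDensity_apply']
    _ ≤ _ := add_le_add_left hσ _

/-- Let `h` be a nondecreasing (right-continuous, so that its
distributional derivative is the Stieltjes measure `Dh`) BV function, with Lebesgue
decomposition `Dh = g·dt + σ`, `σ ⟂ volume`. Then for every Lebesgue measurable `I ⊆ ℝ`,
`H¹(h(I)) ≤ ν(I) + ∫_I g`, where `ν(I) = inf{σ(J) : J open, I ⊆ J}`. -/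
theorem stmt13 (h : StieltjesFunction ℝ) (σ : Measure ℝ) (g : ℝ → ENNReal)
    (hg : Measurable g) (hsing : σ.MutuallySingular volume)
    (hdecomp : h.measure = σ + volume.withDensity g) :
    ∀ I : Set ℝ, MeasurableSet I →
      volume ((h : ℝ → ℝ) '' I) ≤
        (⨅ (J : Set ℝ) (_ : IsOpen J) (_ : I ⊆ J), σ J) + ∫⁻ x in I, g x :=
  stmt13_general h σ g hdecomp
end
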